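/- arXiv:2603.25919 — 5 statements merged into one kernel-verified Lean document; each statement's English description precedes it below -/
import Mathlib

section
/- For every θ > 0 and every δ with δ > 1/(1+θ), setting γ = ((1+θ)·δ − 1)/(δ·θ) one has γ > 0 and p(θ, γ, δ) = θ/(1+θ) = p(θ, 1, 1). In particular, for any such δ ≠ 1 the two distinct parameter pairs (γ, δ) ≠ (1, 1) induce the same conditional probability, so the parametrization of the three-flow binary model is not injective. -/
/-- Conditional probability of the three-flow binary regression-by-composition model:
a Bernoulli(1/2) reference acted on by an odds-scaling flow `θ`, a risk-ratio flow `γ`,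
and a survival-ratio flow `δ`. -/
noncomputable def condProb (θ γ δ : ℝ) : ℝ := 1 - (1 - γ * θ / (1 + θ)) * δ

/-! `θ / (1 + θ)` is the probability produced by the odds flow alone. For fixed `θ` and `δ ≠ 0`,
`condProb θ γ δ` is affine in `γ` with nonzero slope `δ θ / (1 + θ)`, so exactly one risk ratio
`γ` compensates the survival ratio `δ`; it is positive precisely when `(1 + θ) δ > 1`. -/

theorem condProb_one_one (θ : ℝ) : condProb θ 1 1 = θ / (1 + θ) := by
  unfold condProb
  ring

theorem condProb_sub_condProb_one_one {θ : ℝ} (hθ : θ ≠ 0) (h1θ : 1 + θ ≠ 0) {δ : ℝ}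
    (hδ : δ ≠ 0) (γ : ℝ) :
    condProb θ γ δ - θ / (1 + θ) =
      (γ - ((1 + θ) * δ - 1) / (δ * θ)) * (δ * θ / (1 + θ)) := by
  unfold condProb
  field_simp
  ring

theorem condProb_eq_condProb_one_one_iff {θ : ℝ} (hθ : θ ≠ 0) (h1θ : 1 + θ ≠ 0) {δ : ℝ}
    (hδ : δ ≠ 0) (γ : ℝ) :
    condProb θ γ δ = θ / (1 + θ) ↔ γ = ((1 + θ) * δ - 1) / (δ * θ) := by
  have hslope : δ * θ / (1 + θ) ≠ 0 := div_ne_zero (mul_ne_zero hδ hθ) h1θ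
  rw [← sub_eq_zero, condProb_sub_condProb_one_one hθ h1θ hδ, mul_eq_zero, sub_eq_zero,
    or_iff_left hslope]

theorem compensating_riskRatio_pos {θ : ℝ} (hθ : 0 < θ) {δ : ℝ} (hδ : 1 / (1 + θ) < δ) :
    0 < ((1 + θ) * δ - 1) / (δ * θ) := by
  have h1θ : 0 < 1 + θ := by linarith
  have hδ0 : 0 < δ := (one_div_pos.mpr h1θ).trans hδ
  have hnum : 1 < (1 + θ) * δ := by rwa [div_lt_iff₀' h1θ] at hδ
  exact div_pos (sub_pos.mpr hnum) (mul_pos hδ0 hθ)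

/-- For every `θ > 0` and every `δ > 1/(1+θ)`, setting `γ = ((1+θ)·δ − 1)/(δ·θ)` one has
`γ > 0` and `p(θ,γ,δ) = θ/(1+θ) = p(θ,1,1)`; moreover for `δ ≠ 1` the pair `(γ,δ)`
differs from `(1,1)`, so the parametrization is not injective. -/
theorem three_flow_non_identifiable (θ : ℝ) (hθ : 0 < θ) (δ : ℝ)
    (hδ : 1 / (1 + θ) < δ) :
    0 < ((1 + θ) * δ - 1) / (δ * θ) ∧
    condProb θ (((1 + θ) * δ - 1) / (δ * θ)) δ = θ / (1 + θ) ∧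
    condProb θ 1 1 = θ / (1 + θ) ∧
    (δ ≠ 1 → ((((1 + θ) * δ - 1) / (δ * θ)), δ) ≠ ((1 : ℝ), (1 : ℝ))) := by
  have hγ := compensating_riskRatio_pos hθ hδ
  have h1θ : 1 + θ ≠ 0 := by positivity
  have hδ0 : δ ≠ 0 := ((one_div_pos.mpr (by positivity)).trans hδ).ne'
  refine ⟨hγ, (condProb_eq_condProb_one_one_iff hθ.ne' h1θ hδ0 _).mpr rfl,
    condProb_one_one θ, ?_⟩
  intro hδ1 h
  exact hδ1 (congrArg Prod.snd h)
end

section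
/- Let E be a real inner product space, let f : E → ℝ be convex and differentiable with gradient ∇f, let g : E → ℝ be convex, and let η > 0. Then x* ∈ E is a global minimizer of F = f + g over E if and only if x* is a global minimizer over E of the proximal objective u ↦ g(u) + (1/(2η))·‖u − (x* − η·∇f(x*))‖². That is, minimizers of F are exactly the fixed points of the proximal-gradient update. -/
open Filter Topology Set


/-- Fixed-point characterization of the proximal-gradient update: for `f` convex with
gradient `f'`, `g` convex and `η > 0`, `x*` globally minimizes `F = f + g` iff `x*`
globally minimizes `u ↦ g(u) + (1/(2η))·‖u − (x* − η·∇f(x*))‖²`. -/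
theorem minimizer_iff_prox_fixed_point
    {E : Type*} [NormedAddCommGroup E] [InnerProductSpace ℝ E]
    (f g : E → ℝ) (f' : E → E) (hf : ConvexOn ℝ Set.univ f)
    (hf' : ∀ x : E, HasFDerivAt f (innerSL ℝ (f' x)) x)
    (hg : ConvexOn ℝ Set.univ g) (η : ℝ) (hη : 0 < η) (xstar : E) :
    (∀ u : E, f xstar + g xstar ≤ f u + g u) ↔
    (∀ u : E, g xstar + 1 / (2 * η) * ‖xstar - (xstar - η • f' xstar)‖ ^ 2 ≤
      g u + 1 / (2 * η) * ‖u - (xstar - η • f' xstar)‖ ^ 2) := by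
  have hηne : η ≠ 0 := ne_of_gt hη
  set p := f' xstar with hp
  have comb : ∀ (u : E) (t : ℝ), xstar + t • (u - xstar) = (1 - t) • xstar + t • u := by
    intro u t; module
  have hmem : Ioc (0:ℝ) 1 ∈ 𝓝[>] (0:ℝ) := Ioc_mem_nhdsGT_of_mem (by norm_num)
  have key : ∀ u : E, Tendsto (fun t : ℝ => (f (xstar + t • (u - xstar)) - f xstar) / t)
      (𝓝[>] (0:ℝ)) (𝓝 (inner ℝ p (u - xstar) : ℝ)) := by
    intro u
    have hc : HasDerivAt (fun t : ℝ => xstar + t • (u - xstar)) (u - xstar) 0 := by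
      simpa using ((hasDerivAt_id (0:ℝ)).smul_const (u - xstar)).const_add xstar
    have hφ : HasDerivAt (fun t : ℝ => f (xstar + t • (u - xstar)))
        (inner ℝ p (u - xstar) : ℝ) 0 := by
      have := HasFDerivAt.comp_hasDerivAt 0 (by simpa using hf' xstar) hc
      exact this
    have h1 := hasDerivAt_iff_tendsto_slope.mp hφ
    have h2 := h1.mono_left (nhdsWithin_mono _ (fun t ht => ht.ne' : Ioi (0:ℝ) ⊆ {0}ᶜ))
    refine h2.congr' ?_
    filter_upwards [self_mem_nhdsWithin] with t ht
    simp [slope_def_field]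
  -- gradient inequality at xstar
  have grad : ∀ u : E, f xstar + inner ℝ p (u - xstar) ≤ f u := by
    intro u
    have hb : ∀ t ∈ Ioc (0:ℝ) 1,
        (f (xstar + t • (u - xstar)) - f xstar) / t ≤ f u - f xstar := by
      intro t ht
      have hcv := hf.2 (mem_univ xstar) (mem_univ u)
        (by linarith [ht.2] : (0:ℝ) ≤ 1 - t) (le_of_lt ht.1) (by ring)
      rw [← comb u t] at hcv
      simp only [smul_eq_mul] at hcv
      rw [div_le_iff₀ ht.1]
      nlinarith
    have := le_of_tendsto (key u) (Filter.eventually_of_mem hmem hb)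
    linarith
  -- norm expansion
  have e1 : xstar - (xstar - η • p) = η • p := by abel
  have e2 : ∀ u : E, u - (xstar - η • p) = (u - xstar) + η • p := by intro u; abel
  constructor
  · intro hmin
    have S : ∀ u : E, g xstar ≤ g u + inner ℝ p (u - xstar) := by
      intro u
      have hb : ∀ t ∈ Ioc (0:ℝ) 1,
          g xstar - g u ≤ (f (xstar + t • (u - xstar)) - f xstar) / t := by
        intro t ht
        have hgc := hg.2 (mem_univ xstar) (mem_univ u)
          (by linarith [ht.2] : (0:ℝ) ≤ 1 - t) (le_of_lt ht.1) (by ring)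
        rw [← comb u t] at hgc
        simp only [smul_eq_mul] at hgc
        have hm := hmin (xstar + t • (u - xstar))
        rw [le_div_iff₀ ht.1]
        nlinarith
      have := ge_of_tendsto (key u) (Filter.eventually_of_mem hmem hb)
      linarith
    intro u
    rw [e1, e2 u, norm_add_sq_real]
    have hip : (inner ℝ (u - xstar) (η • p) : ℝ) = η * inner ℝ p (u - xstar) := by
      rw [real_inner_smul_right, real_inner_comm]
    rw [hip]
    have hid : 1/(2*η) * (‖u - xstar‖^2 + 2*(η * inner ℝ p (u - xstar)) + ‖η • p‖^2)
        = ‖u - xstar‖^2/(2*η) + inner ℝ p (u - xstar) + 1/(2*η) * ‖η • p‖^2 := by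
      field_simp
    rw [hid]
    have hnn : 0 ≤ ‖u - xstar‖^2/(2*η) := by positivity
    linarith [S u]
  · intro hprox u
    have S : ∀ v : E, g xstar ≤ g v + inner ℝ p (v - xstar) := by
      intro v
      set b : ℝ := inner ℝ p (v - xstar) with hb'
      set K : ℝ := ‖v - xstar‖^2/(2*η) with hK'
      have hKnn : 0 ≤ K := by positivity
      have hb : ∀ t ∈ Ioc (0:ℝ) 1, (0:ℝ) ≤ (g v - g xstar + b) + t * K := by
        intro t ht
        have h := hprox (xstar + t • (v - xstar))
        rw [e1, e2 (xstar + t • (v - xstar))] at h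
        have e3 : xstar + t • (v - xstar) - xstar = t • (v - xstar) := by abel
        rw [e3, norm_add_sq_real] at h
        have hip2 : (inner ℝ (t • (v - xstar)) (η • p) : ℝ) = t * (η * b) := by
          rw [real_inner_smul_left, real_inner_smul_right, real_inner_comm]
        rw [hip2] at h
        simp only [norm_smul, Real.norm_eq_abs, abs_of_pos hη, abs_of_pos ht.1] at h
        have hgc := hg.2 (mem_univ xstar) (mem_univ v)
          (by linarith [ht.2] : (0:ℝ) ≤ 1 - t) (le_of_lt ht.1) (by ring)
        rw [← comb v t] at hgc
        simp only [smul_eq_mul] at hgc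
        have hid2 : 1/(2*η) * ((t * ‖v - xstar‖)^2 + 2*(t*(η*b)) + (η * ‖p‖)^2)
            = t * (t * K) + t * b + 1/(2*η) * (η * ‖p‖)^2 := by
          rw [hK']; field_simp
        rw [hid2] at h
        have h4 : t * 0 ≤ t * ((g v - g xstar + b) + t * K) := by nlinarith
        have := (mul_le_mul_iff_of_pos_left ht.1).mp h4
        linarith
      have tend : Tendsto (fun t : ℝ => (g v - g xstar + b) + t * K) (𝓝[>] (0:ℝ))
          (𝓝 (g v - g xstar + b)) := by
        have hcont : Continuous (fun t : ℝ => (g v - g xstar + b) + t * K) := by continuity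
        simpa using (hcont.tendsto 0).mono_left nhdsWithin_le_nhds
      have := ge_of_tendsto tend (Filter.eventually_of_mem hmem hb)
      linarith
    linarith [grad u, S u]
end

section
/- Let E be a real inner product space, let f : E → ℝ be differentiable with L-Lipschitz gradient ∇f, let g : E → ℝ be convex, and let 0 < η ≤ 1/L. Suppose x⁺ ∈ E is a global minimizer over E of the proximal objective u ↦ g(u) + (1/(2η))·‖u − (x − η·∇f(x))‖². Then, with F = f + g, the sufficient decrease inequality F(x⁺) ≤ F(x) − (1/(2η) − L/2)·‖x⁺ − x‖² holds; in particular F(x⁺) ≤ F(x), so the proximal gradient iteration produces a non-increasing sequence of objective values. -/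
open intervalIntegral in
/-- Descent lemma: if `f` has `L`-Lipschitz gradient `f'`, then
`f (x + v) ≤ f x + ⟪f' x, v⟫ + L/2 * ‖v‖²`. -/
lemma descent_lemma_aux
    {E : Type*} [NormedAddCommGroup E] [InnerProductSpace ℝ E]
    (f : E → ℝ) (f' : E → E) (L : ℝ) (hL : 0 < L)
    (hf' : ∀ x : E, HasFDerivAt f (innerSL ℝ (f' x)) x)
    (hLip : ∀ x y : E, ‖f' x - f' y‖ ≤ L * ‖x - y‖)
    (x v : E) :
    f (x + v) ≤ f x + inner ℝ (f' x) v + L / 2 * ‖v‖ ^ 2 := by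
  have hcontf' : Continuous f' := by
    have : LipschitzWith (Real.toNNReal L) f' :=
      LipschitzWith.of_dist_le_mul fun a b => by
        rw [Real.coe_toNNReal L hL.le, dist_eq_norm, dist_eq_norm]
        exact hLip a b
    exact this.continuous
  set φ : ℝ → ℝ := fun t => f (x + t • v) with hφdef
  have hφ : ∀ t : ℝ, HasDerivAt φ (inner ℝ (f' (x + t • v)) v) t := by
    intro t
    have hline : HasDerivAt (fun t : ℝ => x + t • v) v t := by
      simpa using ((hasDerivAt_id t).smul_const v).const_add x
    have := (hf' (x + t • v)).comp_hasDerivAt t hline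
    simp at this
    exact this
  have hcont : Continuous fun t : ℝ => (inner ℝ (f' (x + t • v)) v : ℝ) := by
    exact (Continuous.inner (hcontf'.comp (by continuity)) continuous_const)
  have hint : f (x + v) - f x = ∫ t in (0:ℝ)..1, inner ℝ (f' (x + t • v)) v := by
    have := intervalIntegral.integral_eq_sub_of_hasDerivAt
      (f := φ) (f' := fun t => (inner ℝ (f' (x + t • v)) v : ℝ))
      (a := 0) (b := 1)
      (fun t _ => hφ t) (hcont.intervalIntegrable 0 1)
    simp only [hφdef, one_smul, zero_smul, add_zero] at this
    linarith [this]
  have hbound : ∀ t ∈ Set.Icc (0:ℝ) 1,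
      (inner ℝ (f' (x + t • v)) v : ℝ) ≤ L * t * ‖v‖ ^ 2 + inner ℝ (f' x) v := by
    intro t ht
    have h1 : (inner ℝ (f' (x + t • v) - f' x) v : ℝ) ≤ ‖f' (x + t • v) - f' x‖ * ‖v‖ :=
      real_inner_le_norm _ _
    have h2 : ‖f' (x + t • v) - f' x‖ ≤ L * (t * ‖v‖) := by
      have := hLip (x + t • v) x
      simpa [norm_smul, abs_of_nonneg ht.1] using this
    have h3 : ‖f' (x + t • v) - f' x‖ * ‖v‖ ≤ L * (t * ‖v‖) * ‖v‖ :=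
      mul_le_mul_of_nonneg_right h2 (norm_nonneg v)
    have h4 : (inner ℝ (f' (x + t • v)) v : ℝ)
        = inner ℝ (f' (x + t • v) - f' x) v + inner ℝ (f' x) v := by
      rw [inner_sub_left]; ring
    nlinarith [sq_nonneg ‖v‖]
  have hintle : (∫ t in (0:ℝ)..1, (inner ℝ (f' (x + t • v)) v : ℝ))
      ≤ ∫ t in (0:ℝ)..1, (L * t * ‖v‖ ^ 2 + inner ℝ (f' x) v) := by
    apply intervalIntegral.integral_mono_on (by norm_num)
      (hcont.intervalIntegrable 0 1)
      ((by continuity : Continuous fun t : ℝ =>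
        L * t * ‖v‖ ^ 2 + (inner ℝ (f' x) v : ℝ)).intervalIntegrable 0 1)
      hbound
  have hval : (∫ t in (0:ℝ)..1, (L * t * ‖v‖ ^ 2 + inner ℝ (f' x) v))
      = L / 2 * ‖v‖ ^ 2 + inner ℝ (f' x) v := by
    have i1 : (∫ t in (0:ℝ)..1, L * t * ‖v‖ ^ 2) = L / 2 * ‖v‖ ^ 2 := by
      have he : (fun t : ℝ => L * t * ‖v‖ ^ 2) = fun t : ℝ => (L * ‖v‖ ^ 2) * t := by
        ext t; ring
      rw [he, intervalIntegral.integral_const_mul, integral_id]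
      ring
    rw [intervalIntegral.integral_add
        (((by continuity : Continuous fun t : ℝ =>
          L * t * ‖v‖ ^ 2)).intervalIntegrable 0 1) intervalIntegrable_const,
      i1, intervalIntegral.integral_const]
    simp
  linarith [hint ▸ hintle.trans_eq hval]

/-- Sufficient decrease of the proximal-gradient step: if `f` has `L`-Lipschitz gradient
`f'`, `g` is convex, `0 < η ≤ 1/L`, and `x⁺` minimizes the proximal objective at `x`,
then `F(x⁺) ≤ F(x) − (1/(2η) − L/2)·‖x⁺ − x‖²`; in particular `F(x⁺) ≤ F(x)`. -/
theorem prox_gradient_sufficient_decrease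
    {E : Type*} [NormedAddCommGroup E] [InnerProductSpace ℝ E]
    (f g : E → ℝ) (f' : E → E) (L : ℝ) (hL : 0 < L)
    (hf' : ∀ x : E, HasFDerivAt f (innerSL ℝ (f' x)) x)
    (hLip : ∀ x y : E, ‖f' x - f' y‖ ≤ L * ‖x - y‖)
    (hg : ConvexOn ℝ Set.univ g) (η : ℝ) (hη : 0 < η) (hηL : η ≤ 1 / L)
    (x xplus : E)
    (hxplus : ∀ u : E, g xplus + 1 / (2 * η) * ‖xplus - (x - η • f' x)‖ ^ 2 ≤
      g u + 1 / (2 * η) * ‖u - (x - η • f' x)‖ ^ 2) :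
    f xplus + g xplus ≤ f x + g x - (1 / (2 * η) - L / 2) * ‖xplus - x‖ ^ 2 ∧
    f xplus + g xplus ≤ f x + g x := by
  have hdesc : f xplus ≤ f x + inner ℝ (f' x) (xplus - x) + L / 2 * ‖xplus - x‖ ^ 2 := by
    have := descent_lemma_aux f f' L hL hf' hLip x (xplus - x)
    simpa using this
  have hkey := hxplus x
  have e1 : xplus - (x - η • f' x) = (xplus - x) + η • f' x := by abel
  have e2 : x - (x - η • f' x) = η • f' x := by abel
  rw [e1, e2] at hkey
  rw [norm_add_sq_real] at hkey
  have hin : (inner ℝ (xplus - x) (η • f' x) : ℝ) = η * inner ℝ (f' x) (xplus - x) := by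
    rw [real_inner_smul_right, real_inner_comm]
  rw [hin] at hkey
  have hηne : (2 * η) ≠ 0 := by positivity
  have hkey' : g xplus + 1 / (2 * η) * ‖xplus - x‖ ^ 2 + inner ℝ (f' x) (xplus - x) ≤ g x := by
    have hsplit : 1 / (2 * η) * (‖xplus - x‖ ^ 2 + 2 * (η * inner ℝ (f' x) (xplus - x))
          + ‖η • f' x‖ ^ 2)
        = 1 / (2 * η) * ‖xplus - x‖ ^ 2 + inner ℝ (f' x) (xplus - x)
          + 1 / (2 * η) * ‖η • f' x‖ ^ 2 := by
      field_simp
    rw [hsplit] at hkey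
    linarith
  have hmain : f xplus + g xplus ≤ f x + g x - (1 / (2 * η) - L / 2) * ‖xplus - x‖ ^ 2 := by
    nlinarith [hdesc, hkey']
  refine ⟨hmain, ?_⟩
  have hcoef : 0 ≤ 1 / (2 * η) - L / 2 := by
    rw [le_div_iff₀ hL] at hηL
    have : 1 / (2 * η) ≥ L / 2 := by
      rw [ge_iff_le, div_le_div_iff₀ (by norm_num) (by positivity)]
      nlinarith
    linarith
  nlinarith [hmain, sq_nonneg ‖xplus - x‖, mul_nonneg hcoef (sq_nonneg ‖xplus - x‖)]
end

section
/- Let E be a real inner product space, let f : E → ℝ be convex and differentiable with L-Lipschitz gradient ∇f, let g : E → ℝ be convex, and let 0 < η ≤ 1/L. Let β : ℕ → E be a sequence such that for every t, β(t+1) is a global minimizer over E of u ↦ g(u) + (1/(2η))·‖u − (β(t) − η·∇f(β(t)))‖², and let x* be a global minimizer of F = f + g over E. Then for every t ≥ 1: F(β(t)) − F(x*) ≤ ‖β(0) − x*‖² / (2·η·t). In particular F(β(t)) − F(x*) = O(1/t). -/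
lemma line_deriv {E : Type*} [NormedAddCommGroup E] [InnerProductSpace ℝ E]
    (f : E → ℝ) (f' : E → E) (hf' : ∀ x : E, HasFDerivAt f (innerSL ℝ (f' x)) x)
    (x d : E) (t : ℝ) :
    HasDerivAt (fun s : ℝ => f (x + s • d)) (inner ℝ (f' (x + t • d)) d : ℝ) t := by
  have h1 : HasDerivAt (fun s : ℝ => x + s • d) d t := by
    simpa using ((hasDerivAt_id t).smul_const d).const_add x
  exact (hf' (x + t • d)).comp_hasDerivAt t h1

lemma convex_grad_ineq {E : Type*} [NormedAddCommGroup E] [InnerProductSpace ℝ E]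
    (f : E → ℝ) (f' : E → E) (hf : ConvexOn ℝ Set.univ f)
    (hf' : ∀ x : E, HasFDerivAt f (innerSL ℝ (f' x)) x) (x u : E) :
    f x + (inner ℝ (f' x) (u - x) : ℝ) ≤ f u := by
  have φconv : ConvexOn ℝ Set.univ (fun t : ℝ => f (x + t • (u - x))) := by
    have h := hf.comp_affineMap (AffineMap.lineMap x u)
    have : (fun t : ℝ => f (x + t • (u - x))) = (f ∘ (AffineMap.lineMap x u)) := by
      funext t
      simp [AffineMap.lineMap_apply, add_comm]
    rw [this]
    simpa using h
  have hs := φconv.le_slope_of_hasDerivAt (Set.mem_univ (0:ℝ)) (Set.mem_univ (1:ℝ)) one_pos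
    (line_deriv f f' hf' x (u - x) 0)
  rw [slope_def_field] at hs
  have h1 : x + (1:ℝ) • (u - x) = u := by rw [one_smul]; abel
  have h0 : x + (0:ℝ) • (u - x) = x := by rw [zero_smul, add_zero]
  rw [h0, h1] at hs
  norm_num at hs
  linarith [hs]

lemma descent_lemma {E : Type*} [NormedAddCommGroup E] [InnerProductSpace ℝ E]
    (f : E → ℝ) (f' : E → E) (L : ℝ)
    (hf' : ∀ x : E, HasFDerivAt f (innerSL ℝ (f' x)) x)
    (hLip : ∀ x y : E, ‖f' x - f' y‖ ≤ L * ‖x - y‖) (x u : E) :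
    f u ≤ f x + (inner ℝ (f' x) (u - x) : ℝ) + L / 2 * ‖u - x‖ ^ 2 := by
  set d : E := u - x with hd
  set ψ : ℝ → ℝ := fun t => f (x + t • d) - t * (inner ℝ (f' x) d : ℝ) - L * ‖d‖ ^ 2 / 2 * t ^ 2
    with hψdef
  have hψ : ∀ t : ℝ, HasDerivAt ψ
      ((inner ℝ (f' (x + t • d)) d : ℝ) - (inner ℝ (f' x) d : ℝ) - L * ‖d‖ ^ 2 * t) t := by
    intro t
    have h1 := line_deriv f f' hf' x d t
    have h2 : HasDerivAt (fun s : ℝ => s * (inner ℝ (f' x) d : ℝ)) (inner ℝ (f' x) d : ℝ) t := by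
      simpa using (hasDerivAt_id t).mul_const (inner ℝ (f' x) d : ℝ)
    have h3 : HasDerivAt (fun s : ℝ => L * ‖d‖ ^ 2 / 2 * s ^ 2) (L * ‖d‖ ^ 2 * t) t := by
      have := (hasDerivAt_pow 2 t).const_mul (L * ‖d‖ ^ 2 / 2)
      refine this.congr_deriv ?_
      ring
    exact (h1.sub h2).sub h3
  have hanti : AntitoneOn ψ (Set.Icc (0:ℝ) 1) := by
    apply antitoneOn_of_deriv_nonpos (convex_Icc 0 1)
    · exact fun t _ => ((hψ t).continuousAt).continuousWithinAt
    · intro t _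
      exact ((hψ t).differentiableAt).differentiableWithinAt
    · intro t ht
      rw [interior_Icc] at ht
      rw [(hψ t).deriv]
      have hip : (inner ℝ (f' (x + t • d)) d : ℝ) - (inner ℝ (f' x) d : ℝ)
          = (inner ℝ (f' (x + t • d) - f' x) d : ℝ) := by rw [inner_sub_left]
      have hcs : (inner ℝ (f' (x + t • d) - f' x) d : ℝ) ≤ ‖f' (x + t • d) - f' x‖ * ‖d‖ :=
        real_inner_le_norm _ _
      have hlip : ‖f' (x + t • d) - f' x‖ ≤ L * (t * ‖d‖) := by
        have := hLip (x + t • d) x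
        simpa [norm_smul, abs_of_pos ht.1] using this
      have hdn : (0:ℝ) ≤ ‖d‖ := norm_nonneg d
      nlinarith [hcs, hlip, hip, mul_nonneg (le_of_lt ht.1) hdn]
  have h01 := hanti (Set.left_mem_Icc.mpr zero_le_one) (Set.right_mem_Icc.mpr zero_le_one)
    zero_le_one
  have hψ0 : ψ 0 = f x := by simp [hψdef]
  have hψ1 : ψ 1 = f u - (inner ℝ (f' x) d : ℝ) - L * ‖d‖ ^ 2 / 2 := by
    have h1 : x + (1:ℝ) • d = u := by rw [one_smul, hd]; abel
    simp only [hψdef, h1, one_mul, one_pow, mul_one]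
  rw [hψ0, hψ1] at h01
  have : L / 2 * ‖d‖ ^ 2 = L * ‖d‖ ^ 2 / 2 := by ring
  linarith [h01]

lemma norm_combo_sq {E : Type*} [NormedAddCommGroup E] [InnerProductSpace ℝ E]
    (a b : E) (l : ℝ) :
    ‖(1 - l) • a + l • b‖ ^ 2
      = (1 - l) * ‖a‖ ^ 2 + l * ‖b‖ ^ 2 - l * (1 - l) * ‖a - b‖ ^ 2 := by
  have h : ∀ y : E, ‖y‖ ^ 2 = (inner ℝ y y : ℝ) := fun y => (real_inner_self_eq_norm_sq y).symm
  simp only [h, inner_add_left, inner_add_right, inner_sub_left, inner_sub_right,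
    real_inner_smul_left, real_inner_smul_right, real_inner_comm b a]
  ring

lemma prox_strong {E : Type*} [NormedAddCommGroup E] [InnerProductSpace ℝ E]
    (g : E → ℝ) (hg : ConvexOn ℝ Set.univ g) (η : ℝ) (hη : 0 < η) (v p : E)
    (hmin : ∀ w : E, g p + 1 / (2 * η) * ‖p - v‖ ^ 2 ≤ g w + 1 / (2 * η) * ‖w - v‖ ^ 2)
    (u : E) :
    g p + 1 / (2 * η) * ‖p - v‖ ^ 2 + 1 / (2 * η) * ‖u - p‖ ^ 2
      ≤ g u + 1 / (2 * η) * ‖u - v‖ ^ 2 := by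
  set h : E → ℝ := fun w => g w + 1 / (2 * η) * ‖w - v‖ ^ 2 with hh
  set c : ℝ := 1 / (2 * η) * ‖u - p‖ ^ 2 with hc
  have hcnn : 0 ≤ c := by positivity
  have step : ∀ l : ℝ, 0 < l → l ≤ 1 → h p + (1 - l) * c ≤ h u := by
    intro l hl0 hl1
    have hw : (1 - l) • p + l • u ∈ Set.univ := Set.mem_univ _
    have hgw : g ((1 - l) • p + l • u) ≤ (1 - l) * g p + l * g u :=
      hg.2 (Set.mem_univ p) (Set.mem_univ u) (by linarith) (le_of_lt hl0) (by ring)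
    have hnw : ‖((1 - l) • p + l • u) - v‖ ^ 2
        = (1 - l) * ‖p - v‖ ^ 2 + l * ‖u - v‖ ^ 2 - l * (1 - l) * ‖p - u‖ ^ 2 := by
      have heq : ((1 - l) • p + l • u) - v = (1 - l) • (p - v) + l • (u - v) := by
        rw [smul_sub, smul_sub]
        have : (1 - l) • v + l • v = v := by
          rw [← add_smul]; simp
        rw [sub_eq_iff_eq_add]
        rw [show (1 - l) • p - (1 - l) • v + (l • u - l • v) + v
          = (1 - l) • p + l • u + (v - ((1 - l) • v + l • v)) by abel, this]
        abel
      rw [heq, norm_combo_sq]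
      congr 2
      rw [show (p - v) - (u - v) = p - u by abel]
    have hmw := hmin ((1 - l) • p + l • u)
    have hpu : ‖p - u‖ = ‖u - p‖ := norm_sub_rev p u
    have key : h p ≤ (1 - l) * h p + l * h u - l * (1 - l) * c := by
      calc h p ≤ g ((1 - l) • p + l • u)
            + 1 / (2 * η) * ‖((1 - l) • p + l • u) - v‖ ^ 2 := hmw
        _ ≤ (1 - l) * h p + l * h u - l * (1 - l) * c := by
            rw [hnw, hh, hc, hpu]
            simp only []
            have hη' : (0:ℝ) < 1 / (2 * η) := by positivity
            nlinarith [hgw]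
    have : l * (h p + (1 - l) * c) ≤ l * h u := by nlinarith [key]
    exact le_of_mul_le_mul_left this hl0
  -- take the limit l → 0
  have final : h p + c ≤ h u := by
    by_contra hcon
    push_neg at hcon
    rcases eq_or_lt_of_le hcnn with hc0 | hcpos
    · have := step 1 one_pos le_rfl
      rw [← hc0] at hcon
      simp at this
      linarith
    · set ε : ℝ := h p + c - h u with hε
      have hεpos : 0 < ε := by linarith
      set l : ℝ := min 1 (ε / (2 * c)) with hl
      have hl0 : 0 < l := lt_min one_pos (div_pos hεpos (by linarith))
      have hl1 : l ≤ 1 := min_le_left _ _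
      have hlc : l * c ≤ ε / 2 := by
        have hle : l ≤ ε / (2 * c) := min_le_right _ _
        calc l * c ≤ (ε / (2 * c)) * c := by nlinarith
          _ = ε / 2 := by field_simp
      have := step l hl0 hl1
      nlinarith [this, hlc, hεpos]
  exact final

lemma prox_step {E : Type*} [NormedAddCommGroup E] [InnerProductSpace ℝ E]
    (f g : E → ℝ) (f' : E → E) (L : ℝ) (hL : 0 < L)
    (hf : ConvexOn ℝ Set.univ f)
    (hf' : ∀ x : E, HasFDerivAt f (innerSL ℝ (f' x)) x)
    (hLip : ∀ x y : E, ‖f' x - f' y‖ ≤ L * ‖x - y‖)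
    (hg : ConvexOn ℝ Set.univ g) (η : ℝ) (hη : 0 < η) (hηL : η ≤ 1 / L)
    (x p : E)
    (hmin : ∀ w : E, g p + 1 / (2 * η) * ‖p - (x - η • f' x)‖ ^ 2 ≤
        g w + 1 / (2 * η) * ‖w - (x - η • f' x)‖ ^ 2) (u : E) :
    f p + g p + 1 / (2 * η) * ‖u - p‖ ^ 2 ≤ f u + g u + 1 / (2 * η) * ‖u - x‖ ^ 2 := by
  have H3 := prox_strong g hg η hη (x - η • f' x) p hmin u
  have key : ∀ w : E, ‖w - (x - η • f' x)‖ ^ 2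
      = ‖w - x‖ ^ 2 + 2 * η * (inner ℝ (f' x) (w - x) : ℝ) + η ^ 2 * ‖f' x‖ ^ 2 := by
    intro w
    have h : w - (x - η • f' x) = (w - x) + η • f' x := by abel
    rw [h, norm_add_sq_real, real_inner_smul_right, norm_smul, mul_pow,
      real_inner_comm, Real.norm_eq_abs, sq_abs]
    ring
  rw [key p, key u] at H3
  have e1 : 1 / (2 * η) * (‖p - x‖ ^ 2 + 2 * η * (inner ℝ (f' x) (p - x) : ℝ)
        + η ^ 2 * ‖f' x‖ ^ 2)
      = 1 / (2 * η) * ‖p - x‖ ^ 2 + (inner ℝ (f' x) (p - x) : ℝ)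
        + η / 2 * ‖f' x‖ ^ 2 := by field_simp
  have e2 : 1 / (2 * η) * (‖u - x‖ ^ 2 + 2 * η * (inner ℝ (f' x) (u - x) : ℝ)
        + η ^ 2 * ‖f' x‖ ^ 2)
      = 1 / (2 * η) * ‖u - x‖ ^ 2 + (inner ℝ (f' x) (u - x) : ℝ)
        + η / 2 * ‖f' x‖ ^ 2 := by field_simp
  rw [e1, e2] at H3
  have d1 : f p ≤ f x + (inner ℝ (f' x) (p - x) : ℝ) + L / 2 * ‖p - x‖ ^ 2 :=
    descent_lemma f f' L hf' hLip x p
  have c1 : f x + (inner ℝ (f' x) (u - x) : ℝ) ≤ f u := convex_grad_ineq f f' hf hf' x u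
  have hLη : L * η ≤ 1 := by
    have := (le_div_iff₀ hL).mp hηL
    linarith
  have hq : L / 2 * ‖p - x‖ ^ 2 ≤ 1 / (2 * η) * ‖p - x‖ ^ 2 := by
    have hA : (0:ℝ) ≤ ‖p - x‖ ^ 2 := sq_nonneg _
    have hL' : L ≤ 1 / η := by rw [le_div_iff₀ hη]; linarith
    have he : 1 / (2 * η) = (1 / η) / 2 := by ring
    rw [he]
    nlinarith [mul_le_mul_of_nonneg_right hL' hA]
  linarith [H3, d1, c1, hq]

/-- `O(1/t)` convergence of the proximal gradient method: with `f` convex and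
`L`-Lipschitz gradient, `g` convex, `0 < η ≤ 1/L`, iterates `β(t+1)` given by exact
proximal-gradient updates, and `x*` a global minimizer of `F = f + g`, one has
`F(β(t)) − F(x*) ≤ ‖β(0) − x*‖² / (2ηt)` for all `t ≥ 1`. -/
theorem prox_gradient_sublinear_rate
    {E : Type*} [NormedAddCommGroup E] [InnerProductSpace ℝ E]
    (f g : E → ℝ) (f' : E → E) (L : ℝ) (hL : 0 < L)
    (hf : ConvexOn ℝ Set.univ f)
    (hf' : ∀ x : E, HasFDerivAt f (innerSL ℝ (f' x)) x)
    (hLip : ∀ x y : E, ‖f' x - f' y‖ ≤ L * ‖x - y‖)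
    (hg : ConvexOn ℝ Set.univ g) (η : ℝ) (hη : 0 < η) (hηL : η ≤ 1 / L)
    (β : ℕ → E)
    (hβ : ∀ t : ℕ, ∀ u : E,
      g (β (t + 1)) + 1 / (2 * η) * ‖β (t + 1) - (β t - η • f' (β t))‖ ^ 2 ≤
        g u + 1 / (2 * η) * ‖u - (β t - η • f' (β t))‖ ^ 2)
    (xstar : E) (hxstar : ∀ u : E, f xstar + g xstar ≤ f u + g u) :
    ∀ t : ℕ, 1 ≤ t →
      f (β t) + g (β t) - (f xstar + g xstar) ≤
        ‖β 0 - xstar‖ ^ 2 / (2 * η * t) := by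
  have step : ∀ t : ℕ, ∀ u : E,
      f (β (t + 1)) + g (β (t + 1)) + 1 / (2 * η) * ‖u - β (t + 1)‖ ^ 2
        ≤ f u + g u + 1 / (2 * η) * ‖u - β t‖ ^ 2 := fun t u =>
    prox_step f g f' L hL hf hf' hLip hg η hη hηL (β t) (β (t + 1)) (hβ t) u
  set F : ℕ → ℝ := fun k => f (β k) + g (β k) with hF
  set Fs : ℝ := f xstar + g xstar with hFs
  have mono : ∀ t : ℕ, F (t + 1) ≤ F t := by
    intro t
    have h := step t (β t)
    have h0 : ‖β t - β t‖ ^ 2 = 0 := by simp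
    have h1 : (0:ℝ) ≤ 1 / (2 * η) * ‖β t - β (t + 1)‖ ^ 2 := by positivity
    rw [h0] at h
    simp only [hF]
    linarith [h, h1]
  have antit : ∀ s t : ℕ, s ≤ t → F t ≤ F s := by
    intro s t hst
    induction t, hst using Nat.le_induction with
    | base => exact le_rfl
    | succ n hn ih => exact le_trans (mono n) ih
  set a : ℕ → ℝ := fun k => 1 / (2 * η) * ‖xstar - β k‖ ^ 2 with ha
  have key : ∀ t : ℕ, F (t + 1) - Fs ≤ a t - a (t + 1) := by
    intro t
    have h := step t xstar
    simp only [hF, hFs, ha]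
    linarith [h]
  intro T hT
  have sum1 : ∑ k ∈ Finset.range T, (F (k + 1) - Fs) ≤ a 0 - a T := by
    calc ∑ k ∈ Finset.range T, (F (k + 1) - Fs)
        ≤ ∑ k ∈ Finset.range T, (a k - a (k + 1)) :=
          Finset.sum_le_sum fun k _ => key k
      _ = a 0 - a T := Finset.sum_range_sub' a T
  have sum2 : (T : ℝ) * (F T - Fs) ≤ ∑ k ∈ Finset.range T, (F (k + 1) - Fs) := by
    have h := Finset.card_nsmul_le_sum (Finset.range T) (fun k => F (k + 1) - Fs)
      (F T - Fs) (fun k hk => by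
        have hk' : k + 1 ≤ T := Finset.mem_range.mp hk
        exact sub_le_sub_right (antit (k + 1) T hk') Fs)
    simpa [nsmul_eq_mul] using h
  have haT : 0 ≤ a T := by positivity
  have ha0 : a 0 = 1 / (2 * η) * ‖β 0 - xstar‖ ^ 2 := by
    simp only [ha, norm_sub_rev]
  have hTpos : (0:ℝ) < T := by exact_mod_cast hT
  have hfinal : (T : ℝ) * (F T - Fs) ≤ 1 / (2 * η) * ‖β 0 - xstar‖ ^ 2 := by
    rw [← ha0]; linarith [sum1, sum2, haT]
  rw [show ‖β 0 - xstar‖ ^ 2 / (2 * η * T) = (1 / (2 * η) * ‖β 0 - xstar‖ ^ 2) / T by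
    field_simp]
  rw [le_div_iff₀ hTpos]
  calc (F T - Fs) * T = (T : ℝ) * (F T - Fs) := by ring
    _ ≤ _ := hfinal
end

section
/- Let γ > 0 and z ∈ ℝ, and define h : ℝ → ℝ by h(x) = (1/2)·(x − z)² + γ·|x|. Then the soft-thresholding value s = sign(z)·max(|z| − γ, 0) is the unique global minimizer of h: h(s) ≤ h(x) for all x ∈ ℝ, and h(x) = h(s) implies x = s. -/
lemma key_ineq (γ z x : ℝ) (hγ : 0 < γ) :
    1 / 2 * (Real.sign z * max (|z| - γ) 0 - z) ^ 2 +
      γ * |Real.sign z * max (|z| - γ) 0| +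
      1 / 2 * (x - Real.sign z * max (|z| - γ) 0) ^ 2 ≤
    1 / 2 * (x - z) ^ 2 + γ * |x| := by
  rcases lt_trichotomy z 0 with hz | hz | hz
  · rw [Real.sign_of_neg hz, abs_of_neg hz]
    rcases le_or_gt (-z - γ) 0 with h | h
    · rw [max_eq_right h]
      simp only [mul_zero, abs_zero]
      rcases abs_cases x with ⟨hx, _⟩ | ⟨hx, _⟩ <;> rw [hx] <;> nlinarith
    · rw [max_eq_left h.le]
      have hs : |(-1 : ℝ) * (-z - γ)| = -z - γ := by
        rw [abs_of_nonpos (by nlinarith)]; ring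
      rw [hs]
      rcases abs_cases x with ⟨hx, _⟩ | ⟨hx, _⟩ <;> rw [hx] <;> nlinarith
  · simp [hz]
    rcases abs_cases x with ⟨hx, _⟩ | ⟨hx, _⟩ <;> rw [hx] <;> nlinarith
  · rw [Real.sign_of_pos hz, abs_of_pos hz]
    rcases le_or_gt (z - γ) 0 with h | h
    · rw [max_eq_right h]
      simp only [mul_zero, abs_zero]
      rcases abs_cases x with ⟨hx, _⟩ | ⟨hx, _⟩ <;> rw [hx] <;> nlinarith
    · rw [max_eq_left h.le]
      have hs : |(1 : ℝ) * (z - γ)| = z - γ := by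
        rw [abs_of_nonneg (by nlinarith)]; ring
      rw [hs]
      rcases abs_cases x with ⟨hx, _⟩ | ⟨hx, _⟩ <;> rw [hx] <;> nlinarith

/-- Soft-thresholding is the proximal operator of the scaled `ℓ₁` penalty: for `γ > 0`
and `z ∈ ℝ`, the value `s = sign(z)·max(|z| − γ, 0)` is the unique global minimizer of
`h(x) = (1/2)(x − z)² + γ|x|`. -/
theorem soft_thresholding_is_lasso_prox (γ z : ℝ) (hγ : 0 < γ) :
    (∀ x : ℝ, 1 / 2 * (Real.sign z * max (|z| - γ) 0 - z) ^ 2 +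
        γ * |Real.sign z * max (|z| - γ) 0| ≤ 1 / 2 * (x - z) ^ 2 + γ * |x|) ∧
    (∀ x : ℝ, 1 / 2 * (x - z) ^ 2 + γ * |x| =
        1 / 2 * (Real.sign z * max (|z| - γ) 0 - z) ^ 2 +
          γ * |Real.sign z * max (|z| - γ) 0| →
      x = Real.sign z * max (|z| - γ) 0) := by
  constructor
  · intro x
    have := key_ineq γ z x hγ
    nlinarith [sq_nonneg (x - Real.sign z * max (|z| - γ) 0)]
  · intro x hx
    have := key_ineq γ z x hγ
    nlinarith [sq_nonneg (x - Real.sign z * max (|z| - γ) 0)]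
end
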